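/- Let 𝒥 = [[a,0,0,-x],[0,a,x,0],[0,-y,-a,0],[y,0,0,-a]] and 𝒥' = [[a',0,0,-x],[0,a',x,0],[0,-y',-a',0],[y',0,0,-a']] be 4×4 real matrices with x ≠ 0, a² = xy - 1 and a'² = xy' - 1. Then there exists a 2×2 matrix B = r·[[0,-1],[1,0]] with r ∈ ℝ such that e^{-B} 𝒥 e^{B} = 𝒥', where e^B is the block matrix [[I,0],[B,I]]. -/

import Mathlib

/-!
Write `K = [[0,-1],[1,0]]`, so that `K² = -I`. In 2×2 blocks `𝒥 = [[aI, xK], [yK, -aI]]`, and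
conjugating it by the shear `e^B = [[I,0],[rK,I]]` keeps this shape while replacing `(a, y)` by
`(a - xr, y - 2ar + xr²)`. Taking `r = (a - a')/x` produces `a'`; since
`(a - xr)² - x(y - 2ar + xr²)` equals `a² - xy = -1`, the new lower entry is forced to be `y'`.
-/

open Matrix

def shear {n R : Type*} [DecidableEq n] [Zero R] [One R] (B : Matrix n n R) :
    Matrix (n ⊕ n) (n ⊕ n) R :=
  fromBlocks 1 0 B 1

def jMatrix {n R : Type*} [DecidableEq n] [Ring R] (K : Matrix n n R) (a x y : R) :
    Matrix (n ⊕ n) (n ⊕ n) R :=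
  fromBlocks (a • 1) (x • K) (y • K) (-(a • 1))

theorem shear_mul_jMatrix_mul_shear {n R : Type*} [Fintype n] [DecidableEq n] [CommRing R]
    {K : Matrix n n R} (hK : K * K = -1) (a x y r : R) :
    shear ((-r) • K) * jMatrix K a x y * shear (r • K) =
      jMatrix K (a - x * r) x (y - 2 * a * r + x * r ^ 2) := by
  simp only [shear, jMatrix, fromBlocks_multiply, Matrix.add_mul, Matrix.smul_mul, Matrix.mul_smul,
    Matrix.one_mul, Matrix.mul_one, Matrix.zero_mul, Matrix.mul_zero, Matrix.neg_mul,
    Matrix.mul_neg, hK, smul_zero, neg_zero, add_zero]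
  congr 1 <;> module

section FinFour

variable {R : Type*}

def quarterTurn (R : Type*) [Ring R] : Matrix (Fin 2) (Fin 2) R := !![0, -1; 1, 0]

theorem reindex_fromBlocks_fin_two (A B C D : Matrix (Fin 2) (Fin 2) R) :
    reindex finSumFinEquiv finSumFinEquiv (fromBlocks A B C D) =
      !![A 0 0, A 0 1, B 0 0, B 0 1;
         A 1 0, A 1 1, B 1 0, B 1 1;
         C 0 0, C 0 1, D 0 0, D 0 1;
         C 1 0, C 1 1, D 1 0, D 1 1] := by
  ext i j
  fin_cases i <;> fin_cases j <;> rfl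

theorem quarterTurn_mul_self [Ring R] : quarterTurn R * quarterTurn R = -1 := by
  ext i j
  fin_cases i <;> fin_cases j <;> simp [quarterTurn]

theorem reindex_shear_quarterTurn [Ring R] (r : R) :
    reindex finSumFinEquiv finSumFinEquiv (shear (r • quarterTurn R)) =
      !![1, 0, 0, 0;
         0, 1, 0, 0;
         0, -r, 1, 0;
         r, 0, 0, 1] := by
  rw [shear, reindex_fromBlocks_fin_two]
  simp [quarterTurn]

theorem reindex_jMatrix_quarterTurn [Ring R] (a x y : R) :
    reindex finSumFinEquiv finSumFinEquiv (jMatrix (quarterTurn R) a x y) =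
      !![a, 0, 0, -x;
         0, a, x, 0;
         0, -y, -a, 0;
         y, 0, 0, -a] := by
  rw [jMatrix, reindex_fromBlocks_fin_two]
  simp [quarterTurn]

end FinFour

theorem noncomplex_types_B_equivalent (a a' x y y' : ℝ) (hx : x ≠ 0)
    (h : a ^ 2 = x * y - 1) (h' : a' ^ 2 = x * y' - 1) :
    ∃ r : ℝ,
      -- e^{-B}, with B = r·[[0,-1],[1,0]]
      (!![1, 0, 0, 0;
          0, 1, 0, 0;
          0, r, 1, 0;
          -r, 0, 0, 1] : Matrix (Fin 4) (Fin 4) ℝ) *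
        !![a, 0, 0, -x;
           0, a, x, 0;
           0, -y, -a, 0;
           y, 0, 0, -a] *
      -- e^{B}
        !![1, 0, 0, 0;
           0, 1, 0, 0;
           0, -r, 1, 0;
           r, 0, 0, 1]
      = !![a', 0, 0, -x;
           0, a', x, 0;
           0, -y', -a', 0;
           y', 0, 0, -a'] := by
  set r := (a - a') / x
  have ha' : a' = a - x * r := by rw [mul_div_cancel₀ _ hx]; ring
  have hy' : y' = y - 2 * a * r + x * r ^ 2 := by
    apply mul_left_cancel₀ hx
    rw [ha'] at h'
    linear_combination h - h'
  refine ⟨r, ?_⟩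
  have key := congrArg (reindex finSumFinEquiv finSumFinEquiv)
    (shear_mul_jMatrix_mul_shear quarterTurn_mul_self a x y r)
  rw [← coe_reindexAlgEquiv ℝ, map_mul, map_mul, coe_reindexAlgEquiv, reindex_shear_quarterTurn,
    reindex_shear_quarterTurn, reindex_jMatrix_quarterTurn, reindex_jMatrix_quarterTurn, neg_neg]
    at key
  rwa [ha', hy']
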